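/- Suppose S : [0,∞) → ℝ is nonincreasing, nonnegative, with S(t) → S̄, and suppose x(t) ∈ ℝ⁵ is a nonnegative solution of x' = (F + S(t)·bcᵀ)x that does not converge to 0 whenever the limit matrix F + S̄bcᵀ has an eigenvalue with positive real part. Then if x(0) > 0 componentwise and S converges, necessarily S̄ ≤ S̄* = 1/R₀ (i.e., the limit of the susceptible fraction cannot exceed the stability threshold). -/

import Mathlib

/-!
If `S̄ > S̄*`, then `S ≥ S̄ > 0` throughout, so `S' = -S cᵀx` forces `∫₀^∞ cᵀx ≤ (S 0 - S̄) / S̄`.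
Since `cᵀx` dominates `x₀, …, x₃` and `x₄' = -r₅ x₄ + μ x₂ + ν x₃`, every coordinate of `x` and of
`x'` is integrable on `(0, ∞)`, hence `x → 0`. On the other hand `F + S̄ b cᵀ` has a positive
eigenvalue `l`: eliminating the eigenvector reduces the eigenvalue equation to `l + r₁ = g l` with
`g` decreasing, and `g 0 > r₁` is exactly `S̄ > S̄*`, so the intermediate value theorem gives a
root. This contradicts the instability hypothesis.
-/

open Set Filter Topology MeasureTheory Matrix

theorem Matrix.ofReal_mem_spectrum_map_ofReal {n : Type*} [Fintype n] [DecidableEq n]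
    {A : Matrix n n ℝ} {v : n → ℝ} {l : ℝ} (hv : v ≠ 0) (h : A *ᵥ v = l • v) :
    (l : ℂ) ∈ spectrum ℂ (A.map Complex.ofReal) := by
  rw [← Matrix.spectrum_toLin', ← Module.End.hasEigenvalue_iff_mem_spectrum]
  refine Module.End.hasEigenvalue_of_hasEigenvector (x := Complex.ofRealHom ∘ v)
    ⟨Module.End.mem_eigenspace_iff.2 (funext fun i => ?_), fun h0 => hv (funext fun i => ?_)⟩
  · have := (RingHom.map_mulVec Complex.ofRealHom A v i).symm
    simp only [h, Pi.smul_apply, smul_eq_mul, map_mul] at this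
    exact this
  · simpa using congrFun h0 i

theorem exists_pos_add_eq_of_le {g : ℝ → ℝ} {r : ℝ} (hg : ContinuousOn g (Ici 0))
    (hle : ∀ l, 0 ≤ l → g l ≤ g 0) (h0 : r < g 0) : ∃ l, 0 < l ∧ l + r = g l := by
  set b := g 0 - r
  have hb : 0 ≤ b := by linarith
  have hcont : ContinuousOn (fun l => g l - l - r) (Icc 0 b) :=
    ((hg.mono Icc_subset_Ici_self).sub continuousOn_id).sub continuousOn_const
  obtain ⟨l, ⟨hl0, -⟩, hroot⟩ := intermediate_value_Icc' hb hcont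
    (show (0 : ℝ) ∈ Icc _ _ from ⟨by linarith [hle b hb], by linarith⟩)
  refine ⟨l, lt_of_le_of_ne hl0 ?_, by linarith⟩
  rintro rfl
  linarith

theorem integrableOn_Ioi_of_hasDerivAt_neg_mul_add {y f : ℝ → ℝ} {r a : ℝ} (hr : 0 < r)
    (hy : ∀ t, HasDerivAt y (-r * y t + f t) t) (hy₀ : ∀ t, 0 ≤ y t)
    (hf : IntegrableOn f (Ioi a)) : IntegrableOn y (Ioi a) := by
  have hyc : Continuous y := continuous_iff_continuousAt.2 fun t => (hy t).continuousAt
  refine integrableOn_Ioi_of_intervalIntegral_norm_bounded ((y a + ∫ t in Ioi a, ‖f t‖) / r) a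
    (fun T => hyc.integrableOn_Icc.mono_set Ioc_subset_Icc_self) tendsto_id
    (eventually_ge_atTop a |>.mono fun T haT => ?_)
  have hfT : IntervalIntegrable f volume a T :=
    (intervalIntegrable_iff_integrableOn_Ioc_of_le haT).2 (hf.mono_set Ioc_subset_Ioi_self)
  have hyT : IntervalIntegrable y volume a T := hyc.intervalIntegrable a T
  have hFTC : -r * (∫ t in a..T, y t) + ∫ t in a..T, f t = y T - y a := by
    rw [← intervalIntegral.integral_const_mul,
      ← intervalIntegral.integral_add (hyT.const_mul _) hfT]
    exact intervalIntegral.integral_eq_sub_of_hasDerivAt (fun t _ => hy t)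
      ((hyT.const_mul _).add hfT)
  have hf_le : ∫ t in a..T, f t ≤ ∫ t in Ioi a, ‖f t‖ :=
    calc ∫ t in a..T, f t ≤ ∫ t in a..T, ‖f t‖ :=
          (Real.le_norm_self _).trans (intervalIntegral.norm_integral_le_integral_norm haT)
      _ = ∫ t in Ioc a T, ‖f t‖ := intervalIntegral.integral_of_le haT
      _ ≤ ∫ t in Ioi a, ‖f t‖ :=
        setIntegral_mono_set hf.norm (ae_of_all _ fun _ => norm_nonneg _)
          (ae_of_all _ Ioc_subset_Ioi_self)
  simp only [id, Real.norm_of_nonneg (hy₀ _)]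
  rw [le_div_iff₀ hr]
  nlinarith [hy₀ T]

theorem integrableOn_Ioi_mul_of_hasDerivAt_neg_mul {S g : ℝ → ℝ} {a l : ℝ}
    (hS : ∀ t, HasDerivAt S (-(S t) * g t) t) (hSg : ∀ t, 0 ≤ S t * g t)
    (hlim : Tendsto S atTop (𝓝 l)) : IntegrableOn (fun t => S t * g t) (Ioi a) :=
  integrableOn_Ioi_deriv_of_nonneg' (fun t _ => (hS t).neg.congr_deriv (by ring))
    (fun t _ => hSg t) hlim.neg

theorem MeasureTheory.IntegrableOn.of_mul_left_of_le {S g : ℝ → ℝ} {s : Set ℝ} {m : ℝ}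
    (hm : 0 < m) (hS : ∀ t, m ≤ S t) (hg₀ : ∀ t, 0 ≤ g t)
    (hg : AEStronglyMeasurable g (volume.restrict s))
    (h : IntegrableOn (fun t => S t * g t) s) : IntegrableOn g s := by
  refine (h.const_mul m⁻¹).mono' hg (ae_of_all _ fun t => ?_)
  rw [Real.norm_of_nonneg (hg₀ t), ← div_eq_inv_mul, le_div_iff₀ hm, mul_comm]
  exact mul_le_mul_of_nonneg_right (hS t) (hg₀ t)

theorem MeasureTheory.IntegrableOn.apply_of_dotProduct {n : Type*} [Fintype n]
    {x : ℝ → n → ℝ} {c : n → ℝ} {s : Set ℝ} {i : n} (hc : ∀ j, 0 ≤ c j) (hci : 0 < c i)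
    (hx : ∀ t j, 0 ≤ x t j)
    (hxi : AEStronglyMeasurable (fun t => x t i) (volume.restrict s))
    (h : IntegrableOn (fun t => c ⬝ᵥ x t) s) : IntegrableOn (fun t => x t i) s := by
  refine (h.const_mul (c i)⁻¹).mono' hxi (ae_of_all _ fun t => ?_)
  rw [Real.norm_of_nonneg (hx t i), ← div_eq_inv_mul, le_div_iff₀ hci, mul_comm]
  exact Finset.single_le_sum (fun j _ => mul_nonneg (hc j) (hx t j)) (Finset.mem_univ i)

theorem tendsto_zero_of_hasDerivAt_mulVec_add {n : Type*} [Fintype n] {A : Matrix n n ℝ}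
    {b : n → ℝ} {g : ℝ → ℝ} {x : ℝ → n → ℝ} {a : ℝ}
    (hx : ∀ t i, HasDerivAt (fun t => x t i) ((A *ᵥ x t) i + b i * g t) t)
    (hxi : ∀ i, IntegrableOn (fun t => x t i) (Ioi a)) (hg : IntegrableOn g (Ioi a)) :
    Tendsto x atTop (𝓝 0) := by
  refine tendsto_pi_nhds.2 fun i =>
    tendsto_zero_of_hasDerivAt_of_integrableOn_Ioi (fun t _ => hx t i) ?_ (hxi i)
  simp only [mulVec, dotProduct]
  exact (integrable_finsetSum _ fun j _ => (hxi j).const_mul (A i j)).add (hg.const_mul (b i))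

def idartMatrix (ε ζ η θ μ ν r₁ r₂ r₃ r₄ r₅ : ℝ) : Matrix (Fin 5) (Fin 5) ℝ :=
  !![-r₁, 0, 0, 0, 0;
     ε, -r₂, 0, 0, 0;
     ζ, 0, -r₃, 0, 0;
     0, η, θ, -r₄, 0;
     0, 0, μ, ν, -r₅]

section IDART

variable {α β γ δ ε ζ η θ μ ν r₁ r₂ r₃ r₄ r₅ S : ℝ}

theorem linearization_mulVec_eq_smul {l v₁ v₂ v₃ v₄ : ℝ}
    (h₀ : l + r₁ = S * (α + β * v₁ + γ * v₂ + δ * v₃)) (h₁ : (l + r₂) * v₁ = ε)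
    (h₂ : (l + r₃) * v₂ = ζ) (h₃ : (l + r₄) * v₃ = η * v₁ + θ * v₂)
    (h₄ : (l + r₅) * v₄ = μ * v₂ + ν * v₃) :
    (idartMatrix ε ζ η θ μ ν r₁ r₂ r₃ r₄ r₅ + S • vecMulVec ![1, 0, 0, 0, 0] ![α, β, γ, δ, 0]) *ᵥ
      ![1, v₁, v₂, v₃, v₄] = l • ![1, v₁, v₂, v₃, v₄] := by
  ext i
  fin_cases i <;> simp [idartMatrix, mulVec, dotProduct, Fin.sum_univ_five]
  · linear_combination -h₀
  · linear_combination -h₁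
  · linear_combination -h₂
  · linear_combination -h₃
  · linear_combination -h₄

theorem exists_pos_mem_spectrum_linearization
    (hβ : 0 ≤ β) (hγ : 0 ≤ γ) (hδ : 0 ≤ δ) (hε : 0 ≤ ε) (hζ : 0 ≤ ζ) (hη : 0 ≤ η) (hθ : 0 ≤ θ)
    (hr₂ : 0 < r₂) (hr₃ : 0 < r₃) (hr₄ : 0 < r₄) (hr₅ : 0 < r₅) (hS : 0 ≤ S)
    (hlt : r₁ * r₂ * r₃ * r₄ < S * (α * r₂ * r₃ * r₄ + β * ε * r₃ * r₄ + γ * ζ * r₂ * r₄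
        + δ * (η * ε * r₃ + ζ * θ * r₂))) :
    ∃ z ∈ spectrum ℂ ((idartMatrix ε ζ η θ μ ν r₁ r₂ r₃ r₄ r₅
        + S • vecMulVec ![1, 0, 0, 0, 0] ![α, β, γ, δ, 0]).map Complex.ofReal), 0 < z.re := by
  -- `l` is an eigenvalue, with eigenvector `(1, v₁, …, v₄)` solved from rows 2–5, iff row 1
  -- reads `l + r₁ = g l`.
  set g : ℝ → ℝ := fun l => S * (α + β * (ε / (l + r₂)) + γ * (ζ / (l + r₃))
    + δ * ((η * (ε / (l + r₂)) + θ * (ζ / (l + r₃))) / (l + r₄)))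
  have hg : ContinuousOn g (Ici 0) := by
    intro l (hl : 0 ≤ l)
    apply ContinuousAt.continuousWithinAt
    simp only [g]
    fun_prop (disch := exact ne_of_gt (by linarith))
  have hle : ∀ l, 0 ≤ l → g l ≤ g 0 := by
    intro l hl
    simp only [g, zero_add]
    gcongr <;> linarith
  have hg0 : r₁ < g 0 := by
    have : g 0 = S * (α * r₂ * r₃ * r₄ + β * ε * r₃ * r₄ + γ * ζ * r₂ * r₄
        + δ * (η * ε * r₃ + ζ * θ * r₂)) / (r₂ * r₃ * r₄) := by
      simp only [g, zero_add]
      field_simp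
    rw [this, lt_div_iff₀ (by positivity)]
    linarith
  obtain ⟨l, hl, hroot⟩ := exists_pos_add_eq_of_le hg hle hg0
  refine ⟨l, ofReal_mem_spectrum_map_ofReal (v := ![1, ε / (l + r₂), ζ / (l + r₃),
    (η * (ε / (l + r₂)) + θ * (ζ / (l + r₃))) / (l + r₄),
    (μ * (ζ / (l + r₃)) + ν * ((η * (ε / (l + r₂)) + θ * (ζ / (l + r₃))) / (l + r₄))) / (l + r₅)])
    (fun h => by simpa using congrFun h 0)
    (linearization_mulVec_eq_smul hroot ?_ ?_ ?_ ?_), by simpa using hl⟩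
  all_goals field_simp

theorem tendsto_zero_of_susceptible_limit_pos (hα : 0 < α) (hβ : 0 < β) (hγ : 0 < γ)
    (hδ : 0 < δ) (hr₅ : 0 < r₅) {x : ℝ → Fin 5 → ℝ} {S : ℝ → ℝ} {Sbar : ℝ}
    (hx : ∀ t i, HasDerivAt (fun t => x t i) ((idartMatrix ε ζ η θ μ ν r₁ r₂ r₃ r₄ r₅ *ᵥ x t) i
      + ![1, 0, 0, 0, 0] i * (S t * (![α, β, γ, δ, 0] ⬝ᵥ x t))) t)
    (hS : ∀ t, HasDerivAt S (-(S t) * (![α, β, γ, δ, 0] ⬝ᵥ x t)) t) (hSanti : Antitone S)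
    (hxnn : ∀ t i, 0 ≤ x t i) (hSbar : 0 < Sbar) (hSlim : Tendsto S atTop (𝓝 Sbar)) :
    Tendsto x atTop (𝓝 0) := by
  set c : Fin 5 → ℝ := ![α, β, γ, δ, 0]
  have hxc : ∀ i, Continuous fun t => x t i := fun i =>
    continuous_iff_continuousAt.2 fun t => (hx t i).continuousAt
  have hc₀ : ∀ j, 0 ≤ c j := by
    intro j
    fin_cases j <;> simp [c] <;> positivity
  have hcx₀ : ∀ t, 0 ≤ c ⬝ᵥ x t := fun t =>
    Finset.sum_nonneg fun j _ => mul_nonneg (hc₀ j) (hxnn t j)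
  have hSle : ∀ t, Sbar ≤ S t := hSanti.le_of_tendsto hSlim
  have hSx : IntegrableOn (fun t => S t * (c ⬝ᵥ x t)) (Ioi 0) :=
    integrableOn_Ioi_mul_of_hasDerivAt_neg_mul hS
      (fun t => mul_nonneg (hSbar.le.trans (hSle t)) (hcx₀ t)) hSlim
  have hcx : IntegrableOn (fun t => c ⬝ᵥ x t) (Ioi 0) :=
    hSx.of_mul_left_of_le hSbar hSle hcx₀
      (continuous_finsetSum _ fun j _ => continuous_const.mul (hxc j)).aestronglyMeasurable
  have hxi : ∀ i : Fin 5, i ≠ 4 → IntegrableOn (fun t => x t i) (Ioi 0) := by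
    intro i hi
    refine hcx.apply_of_dotProduct hc₀ ?_ hxnn (hxc i).aestronglyMeasurable
    fin_cases i <;> simp_all [c]
  have hx₄ : IntegrableOn (fun t => x t 4) (Ioi 0) := by
    refine integrableOn_Ioi_of_hasDerivAt_neg_mul_add hr₅ (fun t => (hx t 4).congr_deriv ?_)
      (fun t => hxnn t 4) (((hxi 2 (by decide)).const_mul μ).add ((hxi 3 (by decide)).const_mul ν))
    simp [idartMatrix, mulVec, dotProduct, Fin.sum_univ_five]
    ring
  refine tendsto_zero_of_hasDerivAt_mulVec_add hx (fun i => ?_) hSx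
  by_cases hi : i = 4
  · exact hi ▸ hx₄
  · exact hxi i hi

end IDART

open Matrix Filter in
theorem susceptible_limit_below_threshold_general
    (α β γ δ ε ζ lam η ρ θ μ κ ν ξ σ τ : ℝ)
    (hα : 0 < α) (hβ : 0 < β) (hγ : 0 < γ) (hδ : 0 < δ) (hε : 0 < ε)
    (hζ : 0 < ζ) (hlam : 0 < lam) (hη : 0 < η) (hρ : 0 < ρ) (hθ : 0 < θ)
    (hμ : 0 < μ) (hκ : 0 < κ) (hν : 0 < ν) (hξ : 0 < ξ) (hσ : 0 < σ)
    (hτ : 0 < τ)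
    (r₁ r₂ r₃ r₄ r₅ : ℝ)
    (hr₁ : r₁ = ε + ζ + lam) (hr₂ : r₂ = η + ρ) (hr₃ : r₃ = θ + μ + κ)
    (hr₄ : r₄ = ν + ξ) (hr₅ : r₅ = σ + τ)
    (F : Matrix (Fin 5) (Fin 5) ℝ)
    (hF : F = !![-r₁, 0, 0, 0, 0;
                 ε, -r₂, 0, 0, 0;
                 ζ, 0, -r₃, 0, 0;
                 0, η, θ, -r₄, 0;
                 0, 0, μ, ν, -r₅])
    (b c : Fin 5 → ℝ)
    (hb : b = ![1, 0, 0, 0, 0]) (hc : c = ![α, β, γ, δ, 0])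
    (x : ℝ → Fin 5 → ℝ) (S : ℝ → ℝ)
    (hx : ∀ t i, HasDerivAt (fun t => x t i)
      ((F *ᵥ x t) i + b i * (S t * (c ⬝ᵥ x t))) t)
    (hS : ∀ t, HasDerivAt S (-(S t) * (c ⬝ᵥ x t)) t)
    (hSanti : ∀ s t : ℝ, s ≤ t → S t ≤ S s)
    (hxnn : ∀ t i, 0 ≤ x t i)
    (Sbar : ℝ) (hSlim : Tendsto S atTop (nhds Sbar))
    (hunstable : (∃ z ∈ spectrum ℂ ((F + Sbar • vecMulVec b c).map (Complex.ofReal)),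
        0 < z.re) → ¬ Tendsto x atTop (nhds 0)) :
    Sbar ≤ r₁ * r₂ * r₃ * r₄ /
      (α * r₂ * r₃ * r₄ + β * ε * r₃ * r₄ + γ * ζ * r₂ * r₄
        + δ * (η * ε * r₃ + ζ * θ * r₂)) := by
  have hr₁' : 0 < r₁ := hr₁ ▸ by positivity
  have hr₂' : 0 < r₂ := hr₂ ▸ by positivity
  have hr₃' : 0 < r₃ := hr₃ ▸ by positivity
  have hr₄' : 0 < r₄ := hr₄ ▸ by positivity
  have hr₅' : 0 < r₅ := hr₅ ▸ by positivity
  by_contra! hlt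
  have hSbar : 0 < Sbar := lt_of_le_of_lt (by positivity) hlt
  subst hF hb hc
  exact hunstable
    (exists_pos_mem_spectrum_linearization hβ.le hγ.le hδ.le hε.le hζ.le hη.le hθ.le
      hr₂' hr₃' hr₄' hr₅' hSbar.le ((div_lt_iff₀ (by positivity)).1 hlt))
    (tendsto_zero_of_susceptible_limit_pos hα hβ hγ hδ hr₅' hx hS (fun _ _ h => hSanti _ _ h)
      hxnn hSbar hSlim)

open Matrix Filter in
/-- The limit of the susceptible fraction cannot exceed the stability
threshold S̄* = 1/R₀. -/
theorem susceptible_limit_below_threshold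
    (α β γ δ ε ζ lam η ρ θ μ κ ν ξ σ τ : ℝ)
    (hα : 0 < α) (hβ : 0 < β) (hγ : 0 < γ) (hδ : 0 < δ) (hε : 0 < ε)
    (hζ : 0 < ζ) (hlam : 0 < lam) (hη : 0 < η) (hρ : 0 < ρ) (hθ : 0 < θ)
    (hμ : 0 < μ) (hκ : 0 < κ) (hν : 0 < ν) (hξ : 0 < ξ) (hσ : 0 < σ)
    (hτ : 0 < τ)
    (r₁ r₂ r₃ r₄ r₅ : ℝ)
    (hr₁ : r₁ = ε + ζ + lam) (hr₂ : r₂ = η + ρ) (hr₃ : r₃ = θ + μ + κ)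
    (hr₄ : r₄ = ν + ξ) (hr₅ : r₅ = σ + τ)
    (F : Matrix (Fin 5) (Fin 5) ℝ)
    (hF : F = !![-r₁, 0, 0, 0, 0;
                 ε, -r₂, 0, 0, 0;
                 ζ, 0, -r₃, 0, 0;
                 0, η, θ, -r₄, 0;
                 0, 0, μ, ν, -r₅])
    (b c : Fin 5 → ℝ)
    (hb : b = ![1, 0, 0, 0, 0]) (hc : c = ![α, β, γ, δ, 0])
    (x : ℝ → Fin 5 → ℝ) (S : ℝ → ℝ)
    (hx : ∀ t i, HasDerivAt (fun t => x t i)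
      ((F *ᵥ x t) i + b i * (S t * (c ⬝ᵥ x t))) t)
    (hS : ∀ t, HasDerivAt S (-(S t) * (c ⬝ᵥ x t)) t)
    (hSanti : ∀ s t : ℝ, s ≤ t → S t ≤ S s)
    (hSnn : ∀ t, 0 ≤ S t)
    (hxnn : ∀ t i, 0 ≤ x t i)
    (hx0 : ∀ i, 0 < x 0 i)
    (Sbar : ℝ) (hSlim : Tendsto S atTop (nhds Sbar))
    (hunstable : (∃ z ∈ spectrum ℂ ((F + Sbar • vecMulVec b c).map (Complex.ofReal)),
        0 < z.re) → ¬ Tendsto x atTop (nhds 0)) :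
    Sbar ≤ r₁ * r₂ * r₃ * r₄ /
      (α * r₂ * r₃ * r₄ + β * ε * r₃ * r₄ + γ * ζ * r₂ * r₄
        + δ * (η * ε * r₃ + ζ * θ * r₂)) :=
  susceptible_limit_below_threshold_general α β γ δ ε ζ lam η ρ θ μ κ ν ξ σ τ hα hβ hγ hδ hε hζ hlam
    hη hρ hθ hμ hκ hν hξ hσ hτ r₁ r₂ r₃ r₄ r₅ hr₁ hr₂ hr₃ hr₄ hr₅ F hF b c hb hc x S hx hS hSanti
    hxnn Sbar hSlim hunstable
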